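/- arXiv:2209.14328 — 5 statements merged into one kernel-verified Lean document; each statement's English description precedes it below -/
import Mathlib

section
/- For square complex matrices A, V ∈ M_n(ℂ), the map h ↦ exp(A + h·V) (matrix exponential) is differentiable at h = 0 with derivative equal to ∫₀¹ exp((1−τ)·A) · V · exp(τ·A) dτ. -/
attribute [local instance] Matrix.linftyOpNormedAddCommGroup Matrix.linftyOpNormedSpace
  Matrix.linftyOpNormedRing Matrix.linftyOpNormedAlgebra

/-!
Differentiating `τ ↦ exp ((1 - τ) • B) * exp (τ • C)` and integrating over `[0, 1]` gives
Duhamel's formula `exp C - exp B = ∫₀¹ exp ((1 - τ) • B) * (C - B) * exp (τ • C) dτ`.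
With `B = A` and `C = A + h • V` it writes `exp (A + h • V) - exp A` as `h` times an integral
depending continuously on `h`; the value of that integral at `h = 0` is then the derivative.
-/

open NormedSpace intervalIntegral

theorem hasDerivAt_of_sub_eq_smul {𝕜 E : Type*} [NontriviallyNormedField 𝕜]
    [NormedAddCommGroup E] [NormedSpace 𝕜 E] {f G : 𝕜 → E} {x : 𝕜}
    (hfG : ∀ h, f (x + h) - f x = h • G h) (hG : ContinuousAt G 0) :
    HasDerivAt f (G 0) x := by
  rw [hasDerivAt_iff_tendsto_slope_zero]
  refine (hG.tendsto.mono_left nhdsWithin_le_nhds).congr' ?_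
  filter_upwards [self_mem_nhdsWithin] with h (hh : h ≠ 0)
  rw [hfG, inv_smul_smul₀ hh]

variable {𝔸 : Type*} [NormedRing 𝔸] [NormedAlgebra ℝ 𝔸] [CompleteSpace 𝔸]

@[fun_prop]
theorem continuous_exp_of_normedAlgebra_real : Continuous (exp : 𝔸 → 𝔸) :=
  continuous_iff_continuousAt.2 fun x => (exp_analytic (𝕂 := ℝ) x).continuousAt

theorem hasDerivAt_exp_one_sub_smul_mul_exp_smul (B C : 𝔸) (t : ℝ) :
    HasDerivAt (fun τ : ℝ => exp ((1 - τ) • B) * exp (τ • C))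
      (exp ((1 - t) • B) * (C - B) * exp (t • C)) t := by
  have hB : HasDerivAt (fun τ : ℝ => exp ((1 - τ) • B)) (-(exp ((1 - t) • B) * B)) t := by
    simpa [Function.comp_def] using
      (hasDerivAt_exp_smul_const B (1 - t)).scomp t ((hasDerivAt_id t).const_sub 1)
  refine (hB.mul (hasDerivAt_exp_smul_const' C t)).congr_deriv ?_
  rw [mul_sub, sub_mul, neg_mul, mul_assoc, mul_assoc]
  abel

theorem exp_sub_exp_eq_integral (B C : 𝔸) :
    exp C - exp B = ∫ τ in (0:ℝ)..1, exp ((1 - τ) • B) * (C - B) * exp (τ • C) := by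
  rw [integral_eq_sub_of_hasDerivAt
    (fun t _ => hasDerivAt_exp_one_sub_smul_mul_exp_smul B C t)
    ((by fun_prop : Continuous _).intervalIntegrable 0 1)]
  simp

/-- For `h ≠ 0`, the difference quotient of `h ↦ exp (A + h • V)` at `0`. -/
noncomputable def duhamelSlope (A V : 𝔸) (h : ℝ) : 𝔸 :=
  ∫ τ in (0:ℝ)..1, exp ((1 - τ) • A) * V * exp (τ • (A + h • V))

theorem exp_add_smul_sub_exp (A V : 𝔸) (h : ℝ) :
    exp (A + h • V) - exp A = h • duhamelSlope A V h := by
  rw [exp_sub_exp_eq_integral, add_sub_cancel_left, duhamelSlope,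
    ← integral_smul]
  simp only [mul_smul_comm, smul_mul_assoc]

theorem continuous_duhamelSlope (A V : 𝔸) : Continuous (duhamelSlope A V) :=
  continuous_parametric_intervalIntegral_of_continuous' (by fun_prop) 0 1

theorem hasDerivAt_exp_add_smul (A V : 𝔸) :
    HasDerivAt (fun h : ℝ => exp (A + h • V))
      (∫ τ in (0:ℝ)..1, exp ((1 - τ) • A) * V * exp (τ • A)) 0 := by
  have hslope := hasDerivAt_of_sub_eq_smul (f := fun h : ℝ => exp (A + h • V)) (x := 0)
    (fun h => by simpa using exp_add_smul_sub_exp A V h)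
    (continuous_duhamelSlope A V).continuousAt
  simpa [duhamelSlope] using hslope

theorem derivative_of_matrix_exponential_general (n : ℕ)
    (A V : Matrix (Fin n) (Fin n) ℂ) :
    HasDerivAt (fun h : ℝ => NormedSpace.exp (A + (h : ℂ) • V))
      (∫ τ in (0:ℝ)..1,
        NormedSpace.exp (((1 : ℂ) - (τ : ℂ)) • A) * V * NormedSpace.exp ((τ : ℂ) • A))
      0 := by
  have hreal : ∀ (t : ℝ) (M : Matrix (Fin n) (Fin n) ℂ), (t : ℂ) • M = t • M :=
    fun t M => Complex.coe_smul t M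
  simp only [hreal, ← Complex.ofReal_one, ← Complex.ofReal_sub]
  exact hasDerivAt_exp_add_smul A V

/-- For square complex matrices `A, V ∈ Mₙ(ℂ)`, the map `h ↦ exp (A + h • V)` (matrix
exponential) is differentiable at `h = 0` with derivative
`∫₀¹ exp ((1 - τ) • A) * V * exp (τ • A) dτ`. -/
theorem derivative_of_matrix_exponential (n : ℕ) (hn : 1 ≤ n)
    (A V : Matrix (Fin n) (Fin n) ℂ) :
    HasDerivAt (fun h : ℝ => NormedSpace.exp (A + (h : ℂ) • V))
      (∫ τ in (0:ℝ)..1,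
        NormedSpace.exp (((1 : ℂ) - (τ : ℂ)) • A) * V * NormedSpace.exp ((τ : ℂ) • A))
      0 :=
  derivative_of_matrix_exponential_general n A V
end

section
/- (Derivative of the singular values.) Let n ≥ 1 and let A, U, S, V : ℝ → M_n(ℂ) be differentiable at t₀ ∈ ℝ with A(t) = U(t) S(t) V(t)* for all t in a neighborhood of t₀, where U(t) and V(t) are unitary and S(t) is diagonal with real entries s_1(t), …, s_n(t). Set Ã = U(t₀)* A'(t₀) V(t₀), where ' denotes the derivative at t₀ and * the conjugate transpose. Then for every i, s_i'(t₀) = Re(Ã_{ii}). -/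
/-!
Differentiating `A = U S Vᴴ` and conjugating by the unitaries at `t₀` gives
`Ã = (Uᴴ U') S + S' + S (V'ᴴ V)`. Differentiating `Uᴴ U = 1` shows that `Uᴴ U'` is skew-Hermitian,
and likewise `V'ᴴ V`, so their diagonal entries are purely imaginary; since `S` is real diagonal,
the real part of `Ãᵢᵢ` is exactly `sᵢ'`.
-/

open Matrix Filter Topology

variable {l m p : Type*}

def HasMatrixDerivAt (X : ℝ → Matrix m p ℂ) (X' : Matrix m p ℂ) (t₀ : ℝ) : Prop :=
  ∀ i j, HasDerivAt (fun t => X t i j) (X' i j) t₀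

namespace HasMatrixDerivAt

variable {X Y : ℝ → Matrix m p ℂ} {X' X'' : Matrix m p ℂ} {t₀ : ℝ}

theorem const (C : Matrix m p ℂ) : HasMatrixDerivAt (fun _ => C) 0 t₀ :=
  fun _ _ => hasDerivAt_const t₀ _

theorem unique (h₁ : HasMatrixDerivAt X X' t₀) (h₂ : HasMatrixDerivAt X X'' t₀) : X' = X'' :=
  Matrix.ext fun i j => (h₁ i j).unique (h₂ i j)

theorem congr_of_eventuallyEq (h : HasMatrixDerivAt X X' t₀) (hXY : Y =ᶠ[𝓝 t₀] X) :
    HasMatrixDerivAt Y X' t₀ := fun i j =>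
  (h i j).congr_of_eventuallyEq (hXY.mono fun _ ht => congrFun₂ ht i j)

theorem conjTranspose (h : HasMatrixDerivAt X X' t₀) :
    HasMatrixDerivAt (fun t => (X t)ᴴ) X'ᴴ t₀ := fun i j => by
  simpa only [conjTranspose_apply] using (h j i).star

theorem mul [Fintype m] {X : ℝ → Matrix l m ℂ} {Y : ℝ → Matrix m p ℂ}
    {X' : Matrix l m ℂ} {Y' : Matrix m p ℂ}
    (hX : HasMatrixDerivAt X X' t₀) (hY : HasMatrixDerivAt Y Y' t₀) :
    HasMatrixDerivAt (fun t => X t * Y t) (X' * Y t₀ + X t₀ * Y') t₀ := fun i j => by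
  simp only [mul_apply, Matrix.add_apply]
  rw [← Finset.sum_add_distrib]
  exact HasDerivAt.fun_sum fun k _ => (hX i k).mul (hY k j)

theorem conjTranspose_mul_add_eq_zero_of_unitary [Fintype m] [DecidableEq m]
    {U : ℝ → Matrix m m ℂ} {U' : Matrix m m ℂ} (h : HasMatrixDerivAt U U' t₀)
    (hU : ∀ᶠ t in 𝓝 t₀, U t ∈ unitaryGroup m ℂ) :
    U'ᴴ * U t₀ + (U t₀)ᴴ * U' = 0 :=
  (h.conjTranspose.mul h).unique <| (const 1).congr_of_eventuallyEq <|
    hU.mono fun _ ht => mem_unitaryGroup_iff'.mp ht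

end HasMatrixDerivAt

theorem hasMatrixDerivAt_diagonal [DecidableEq m] {s : m → ℝ → ℝ} {s' : m → ℝ} {t₀ : ℝ}
    (hs : ∀ i, HasDerivAt (s i) (s' i) t₀) :
    HasMatrixDerivAt (fun t => diagonal fun i => (s i t : ℂ)) (diagonal fun i => (s' i : ℂ)) t₀ := by
  intro i j
  rcases eq_or_ne i j with rfl | hij
  · simpa only [diagonal_apply_eq] using (hs i).ofReal_comp
  · simpa only [diagonal_apply_ne _ hij] using hasDerivAt_const t₀ (0 : ℂ)

theorem re_apply_self_eq_zero_of_conjTranspose_add_self_eq_zero {X : Matrix m m ℂ}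
    (h : Xᴴ + X = 0) (i : m) : (X i i).re = 0 := by
  have := congrArg Complex.re (congrFun₂ h i i)
  simp only [Matrix.add_apply, conjTranspose_apply, Complex.star_def, Complex.add_re,
    Complex.conj_re, Matrix.zero_apply, Complex.zero_re] at this
  linarith

theorem deriv_singular_values_general (n : ℕ)
    (A U V : ℝ → Matrix (Fin n) (Fin n) ℂ) (s : Fin n → ℝ → ℝ) (t₀ : ℝ)
    (A' U' V' : Matrix (Fin n) (Fin n) ℂ) (s' : Fin n → ℝ)
    (hA' : ∀ i j, HasDerivAt (fun t => A t i j) (A' i j) t₀)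
    (hU' : ∀ i j, HasDerivAt (fun t => U t i j) (U' i j) t₀)
    (hV' : ∀ i j, HasDerivAt (fun t => V t i j) (V' i j) t₀)
    (hs' : ∀ i, HasDerivAt (s i) (s' i) t₀)
    (hU : ∀ᶠ t in nhds t₀, U t ∈ Matrix.unitaryGroup (Fin n) ℂ)
    (hV : ∀ᶠ t in nhds t₀, V t ∈ Matrix.unitaryGroup (Fin n) ℂ)
    (hSVD : ∀ᶠ t in nhds t₀,
      A t = U t * Matrix.diagonal (fun i => ((s i t : ℝ) : ℂ)) * (V t)ᴴ) :
    ∀ i, s' i = (((U t₀)ᴴ * A' * V t₀) i i).re := by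
  have hU' : HasMatrixDerivAt U U' t₀ := hU'
  have hV' : HasMatrixDerivAt V V' t₀ := hV'
  set S := diagonal fun i => (s i t₀ : ℂ)
  set S' := diagonal fun i => (s' i : ℂ)
  have hA'_eq : A' = (U' * S + U t₀ * S') * (V t₀)ᴴ + U t₀ * S * V'ᴴ :=
    HasMatrixDerivAt.unique hA' <|
      ((hU'.mul (hasMatrixDerivAt_diagonal hs')).mul hV'.conjTranspose).congr_of_eventuallyEq hSVD
  have hU₀ : (U t₀)ᴴ * U t₀ = 1 := mem_unitaryGroup_iff'.mp hU.self_of_nhds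
  have hV₀ : (V t₀)ᴴ * V t₀ = 1 := mem_unitaryGroup_iff'.mp hV.self_of_nhds
  have hÃ : (U t₀)ᴴ * A' * V t₀ = (U t₀)ᴴ * U' * S + S' + S * (V'ᴴ * V t₀) := by
    calc (U t₀)ᴴ * A' * V t₀
        = (U t₀)ᴴ * U' * S * ((V t₀)ᴴ * V t₀) + (U t₀)ᴴ * U t₀ * S' * ((V t₀)ᴴ * V t₀)
          + (U t₀)ᴴ * U t₀ * (S * (V'ᴴ * V t₀)) := by rw [hA'_eq]; noncomm_ring
      _ = _ := by simp only [hU₀, hV₀, Matrix.one_mul, Matrix.mul_one]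
  have hUskew := re_apply_self_eq_zero_of_conjTranspose_add_self_eq_zero (X := (U t₀)ᴴ * U') <| by
    simpa only [conjTranspose_mul, conjTranspose_conjTranspose] using
      hU'.conjTranspose_mul_add_eq_zero_of_unitary hU
  have hVskew := re_apply_self_eq_zero_of_conjTranspose_add_self_eq_zero (X := V'ᴴ * V t₀) <| by
    simpa only [conjTranspose_mul, conjTranspose_conjTranspose, add_comm] using
      hV'.conjTranspose_mul_add_eq_zero_of_unitary hV
  intro i
  simp [hÃ, S, S', mul_diagonal, diagonal_mul, hUskew i, hVskew i]

/-- **Derivative of the singular values.** Along a differentiable SVD path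
`A(t) = U(t) S(t) V(t)ᴴ` with `U, V` unitary and `S = diagonal (s₁,…,sₙ)` real, the
derivative of each singular value is `sᵢ'(t₀) = Re Ãᵢᵢ` where `Ã = U(t₀)ᴴ A'(t₀) V(t₀)`. -/
theorem deriv_singular_values (n : ℕ) (hn : 1 ≤ n)
    (A U V : ℝ → Matrix (Fin n) (Fin n) ℂ) (s : Fin n → ℝ → ℝ) (t₀ : ℝ)
    (A' U' V' : Matrix (Fin n) (Fin n) ℂ) (s' : Fin n → ℝ)
    (hA' : ∀ i j, HasDerivAt (fun t => A t i j) (A' i j) t₀)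
    (hU' : ∀ i j, HasDerivAt (fun t => U t i j) (U' i j) t₀)
    (hV' : ∀ i j, HasDerivAt (fun t => V t i j) (V' i j) t₀)
    (hs' : ∀ i, HasDerivAt (s i) (s' i) t₀)
    (hU : ∀ᶠ t in nhds t₀, U t ∈ Matrix.unitaryGroup (Fin n) ℂ)
    (hV : ∀ᶠ t in nhds t₀, V t ∈ Matrix.unitaryGroup (Fin n) ℂ)
    (hSVD : ∀ᶠ t in nhds t₀,
      A t = U t * Matrix.diagonal (fun i => ((s i t : ℝ) : ℂ)) * (V t)ᴴ) :
    ∀ i, s' i = (((U t₀)ᴴ * A' * V t₀) i i).re :=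
  deriv_singular_values_general n A U V s t₀ A' U' V' s' hA' hU' hV' hs' hU hV hSVD
end

section
/- (Off-diagonal derivative of the left singular vectors.) Let n ≥ 1 and let A, U, S, V : ℝ → M_n(ℂ) be differentiable at t₀ ∈ ℝ with A(t) = U(t) S(t) V(t)* for all t in a neighborhood of t₀, where U(t) and V(t) are unitary and S(t) is diagonal with real entries s_1(t), …, s_n(t). Set Ã = U(t₀)* A'(t₀) V(t₀), where ' denotes the derivative at t₀ and * the conjugate transpose, and write s_i = s_i(t₀). Then for all i ≠ j: (s_j² − s_i²) · (U(t₀)* U'(t₀))_{ij} = (Ã S(t₀) + S(t₀) Ã*)_{ij} = s_j·Ã_{ij} + s_i·conj(Ã_{ji}). -/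
/-!
Differentiating `Uᴴ U = 1` shows that `P = Uᴴ U'` is skew-Hermitian, and likewise `Vᴴ V'`.
The product rule applied to `A = U S Vᴴ` gives `Ã = P S + S' + S (Vᴴ V')ᴴ`; by the two skew
symmetries `Ã S + S Ãᴴ = P S² − S² P + (diagonal)`, whose off-diagonal `(i, j)` entry is
`(sⱼ² − sᵢ²) Pᵢⱼ`.
-/

open Matrix Filter Topology

namespace Matrix

variable {m n p 𝕜 : Type*} [RCLike 𝕜]

/-- Matrices carry no canonical norm, so derivatives of matrix paths are taken entrywise. -/
def HasEntrywiseDerivAt (M : ℝ → Matrix m n 𝕜) (M' : Matrix m n 𝕜) (t : ℝ) : Prop :=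
  ∀ i j, HasDerivAt (fun t => M t i j) (M' i j) t

namespace HasEntrywiseDerivAt

variable {M N : ℝ → Matrix m n 𝕜} {M' M'' : Matrix m n 𝕜} {t : ℝ}

theorem unique (h₁ : HasEntrywiseDerivAt M M' t) (h₂ : HasEntrywiseDerivAt M M'' t) :
    M' = M'' := by
  ext i j
  exact (h₁ i j).unique (h₂ i j)

theorem congr_of_eventuallyEq (h : HasEntrywiseDerivAt M M' t) (hNM : N =ᶠ[𝓝 t] M) :
    HasEntrywiseDerivAt N M' t := fun i j =>
  (h i j).congr_of_eventuallyEq (hNM.mono fun _ ht => by simp only [ht])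

theorem conjTranspose (h : HasEntrywiseDerivAt M M' t) :
    HasEntrywiseDerivAt (fun t => (M t)ᴴ) M'ᴴ t := fun i j => (h j i).star

theorem mul [Fintype n] {N : ℝ → Matrix n p 𝕜} {N' : Matrix n p 𝕜}
    (hM : HasEntrywiseDerivAt M M' t) (hN : HasEntrywiseDerivAt N N' t) :
    HasEntrywiseDerivAt (fun t => M t * N t) (M' * N t + M t * N') t := by
  intro i j
  simp only [mul_apply, add_apply, ← Finset.sum_add_distrib]
  exact HasDerivAt.fun_sum fun k _ => (hM i k).mul (hN k j)

end HasEntrywiseDerivAt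

theorem hasEntrywiseDerivAt_const (M : Matrix m n 𝕜) (t : ℝ) :
    HasEntrywiseDerivAt (fun _ => M) 0 t := fun _ _ => hasDerivAt_const t _

theorem hasEntrywiseDerivAt_diagonal [DecidableEq m] {d : ℝ → m → 𝕜} {d' : m → 𝕜} {t : ℝ}
    (h : ∀ i, HasDerivAt (fun t => d t i) (d' i) t) :
    HasEntrywiseDerivAt (fun t => diagonal (d t)) (diagonal d') t := by
  intro i j
  rcases eq_or_ne i j with rfl | hij
  · simpa only [diagonal_apply_eq] using h i
  · simpa only [diagonal_apply_ne _ hij] using hasDerivAt_const t (0 : 𝕜)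

theorem HasEntrywiseDerivAt.conjTranspose_mul_skew [Fintype m] [DecidableEq m]
    {M : ℝ → Matrix m m 𝕜} {M' : Matrix m m 𝕜} {t₀ : ℝ} (hM : HasEntrywiseDerivAt M M' t₀)
    (hunit : ∀ᶠ t in 𝓝 t₀, M t ∈ unitaryGroup m 𝕜) :
    ((M t₀)ᴴ * M')ᴴ = -((M t₀)ᴴ * M') := by
  have hconst : (fun t => (M t)ᴴ * M t) =ᶠ[𝓝 t₀] fun _ => 1 :=
    hunit.mono fun _ ht => mem_unitaryGroup_iff'.mp ht
  have hsum : M'ᴴ * M t₀ + (M t₀)ᴴ * M' = 0 :=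
    (hM.conjTranspose.mul hM).unique
      ((hasEntrywiseDerivAt_const 1 t₀).congr_of_eventuallyEq hconst)
  rw [conjTranspose_mul, conjTranspose_conjTranspose]
  exact eq_neg_of_add_eq_zero_left hsum

section Complex

variable [Fintype m] [DecidableEq m]

theorem mul_diagonal_add_diagonal_mul_conjTranspose_apply (X : Matrix m m ℂ) (s : m → ℝ)
    (i j : m) :
    (X * diagonal (fun k => (s k : ℂ)) + diagonal (fun k => (s k : ℂ)) * Xᴴ) i j
      = (s j : ℂ) * X i j + (s i : ℂ) * starRingEnd ℂ (X j i) := by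
  simp only [add_apply, mul_diagonal, diagonal_mul, conjTranspose_apply, RCLike.star_def]
  ring

theorem mul_diagonal_add_diagonal_mul_conjTranspose_apply_of_skew {P R : Matrix m m ℂ}
    (hP : Pᴴ = -P) (hR : Rᴴ = -R) (s : m → ℝ) (d : m → ℂ) {i j : m} (hij : i ≠ j) :
    let S := diagonal fun k => (s k : ℂ)
    let X := P * S + diagonal d + S * R
    (X * S + S * Xᴴ) i j = ((s j ^ 2 - s i ^ 2 : ℝ) : ℂ) * P i j := by
  intro S X
  have hS : Sᴴ = S := by simp [S]
  have hX : X * S + S * Xᴴ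
      = P * (S * S) - S * S * P + (diagonal d * S + S * (diagonal d)ᴴ) := by
    simp only [X, conjTranspose_add, conjTranspose_mul, hS, hP, hR, add_mul, mul_add, mul_neg,
      neg_mul, mul_assoc]
    abel
  rw [hX]
  simp only [S, diagonal_mul_diagonal, diagonal_conjTranspose, diagonal_add, add_apply, sub_apply,
    mul_diagonal, diagonal_mul, diagonal_apply_ne _ hij, add_zero, Complex.ofReal_sub,
    Complex.ofReal_pow]
  ring

end Complex

end Matrix

theorem offdiag_deriv_left_singular_vectors_general (n : ℕ)
    (A U V : ℝ → Matrix (Fin n) (Fin n) ℂ) (s : Fin n → ℝ) (sf : Fin n → ℝ → ℝ) (t₀ : ℝ)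
    (A' U' V' : Matrix (Fin n) (Fin n) ℂ) (s' : Fin n → ℝ)
    (Atil S₀ : Matrix (Fin n) (Fin n) ℂ)
    (hA' : ∀ i j, HasDerivAt (fun t => A t i j) (A' i j) t₀)
    (hU' : ∀ i j, HasDerivAt (fun t => U t i j) (U' i j) t₀)
    (hV' : ∀ i j, HasDerivAt (fun t => V t i j) (V' i j) t₀)
    (hs' : ∀ i, HasDerivAt (sf i) (s' i) t₀)
    (hs : ∀ i, sf i t₀ = s i)
    (hU : ∀ᶠ t in nhds t₀, U t ∈ Matrix.unitaryGroup (Fin n) ℂ)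
    (hV : ∀ᶠ t in nhds t₀, V t ∈ Matrix.unitaryGroup (Fin n) ℂ)
    (hSVD : ∀ᶠ t in nhds t₀,
      A t = U t * Matrix.diagonal (fun i => ((sf i t : ℝ) : ℂ)) * (V t)ᴴ)
    (hAtil : Atil = (U t₀)ᴴ * A' * V t₀)
    (hS₀ : S₀ = Matrix.diagonal (fun i => ((s i : ℝ) : ℂ))) :
    ∀ i j, i ≠ j →
      (((s j ^ 2 - s i ^ 2 : ℝ) : ℂ) * (((U t₀)ᴴ * U') i j) = (Atil * S₀ + S₀ * Atilᴴ) i j ∧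
        (Atil * S₀ + S₀ * Atilᴴ) i j
          = ((s j : ℝ) : ℂ) * Atil i j + ((s i : ℝ) : ℂ) * starRingEnd ℂ (Atil j i)) := by
  intro i j hij
  have hUd : HasEntrywiseDerivAt U U' t₀ := hU'
  have hVd : HasEntrywiseDerivAt V V' t₀ := hV'
  set D' : Matrix (Fin n) (Fin n) ℂ := diagonal fun k => (s' k : ℂ)
  have hS : HasEntrywiseDerivAt (fun t => diagonal fun k => (sf k t : ℂ)) D' t₀ :=
    hasEntrywiseDerivAt_diagonal fun k => (hs' k).ofReal_comp
  have hSt₀ : (diagonal fun k => (sf k t₀ : ℂ)) = S₀ := by simp only [hs, hS₀]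
  have hA'eq : A' = (U' * S₀ + U t₀ * D') * (V t₀)ᴴ + U t₀ * S₀ * V'ᴴ := by
    have hprod := ((hUd.mul hS).mul hVd.conjTranspose).congr_of_eventuallyEq hSVD
    rw [hSt₀] at hprod
    exact HasEntrywiseDerivAt.unique hA' hprod
  have hUunit : (U t₀)ᴴ * U t₀ = 1 := mem_unitaryGroup_iff'.mp hU.self_of_nhds
  have hVunit : (V t₀)ᴴ * V t₀ = 1 := mem_unitaryGroup_iff'.mp hV.self_of_nhds
  have hAtil' : Atil = (U t₀)ᴴ * U' * S₀ + D' + S₀ * ((V t₀)ᴴ * V')ᴴ := by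
    rw [hAtil, hA'eq, conjTranspose_mul, conjTranspose_conjTranspose]
    simp only [add_mul, mul_add, mul_assoc, hVunit, mul_one]
    simp only [← mul_assoc, hUunit, one_mul]
  have hVskew : ((V t₀)ᴴ * V')ᴴᴴ = -((V t₀)ᴴ * V')ᴴ := by
    simp [hVd.conjTranspose_mul_skew hV]
  constructor
  · rw [hAtil', hS₀]
    exact (mul_diagonal_add_diagonal_mul_conjTranspose_apply_of_skew
      (hUd.conjTranspose_mul_skew hU) hVskew s _ hij).symm
  · rw [hS₀]
    exact mul_diagonal_add_diagonal_mul_conjTranspose_apply Atil s i j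

/-- **Off-diagonal derivative of the left singular vectors.** Along a differentiable SVD path
`A(t) = U(t) S(t) V(t)ᴴ` with `U, V` unitary and `S = diagonal (s₁,…,sₙ)` real, for `i ≠ j`:
`(sⱼ² − sᵢ²) (U(t₀)ᴴ U'(t₀))ᵢⱼ = (Atil S(t₀) + S(t₀) Atilᴴ)ᵢⱼ = sⱼ Atilᵢⱼ + sᵢ conj Atilⱼᵢ`,
where `Atil = U(t₀)ᴴ A'(t₀) V(t₀)`. -/
theorem offdiag_deriv_left_singular_vectors (n : ℕ) (hn : 1 ≤ n)
    (A U V : ℝ → Matrix (Fin n) (Fin n) ℂ) (s : Fin n → ℝ) (sf : Fin n → ℝ → ℝ) (t₀ : ℝ)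
    (A' U' V' : Matrix (Fin n) (Fin n) ℂ) (s' : Fin n → ℝ)
    (Atil S₀ : Matrix (Fin n) (Fin n) ℂ)
    (hA' : ∀ i j, HasDerivAt (fun t => A t i j) (A' i j) t₀)
    (hU' : ∀ i j, HasDerivAt (fun t => U t i j) (U' i j) t₀)
    (hV' : ∀ i j, HasDerivAt (fun t => V t i j) (V' i j) t₀)
    (hs' : ∀ i, HasDerivAt (sf i) (s' i) t₀)
    (hs : ∀ i, sf i t₀ = s i)
    (hU : ∀ᶠ t in nhds t₀, U t ∈ Matrix.unitaryGroup (Fin n) ℂ)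
    (hV : ∀ᶠ t in nhds t₀, V t ∈ Matrix.unitaryGroup (Fin n) ℂ)
    (hSVD : ∀ᶠ t in nhds t₀,
      A t = U t * Matrix.diagonal (fun i => ((sf i t : ℝ) : ℂ)) * (V t)ᴴ)
    (hAtil : Atil = (U t₀)ᴴ * A' * V t₀)
    (hS₀ : S₀ = Matrix.diagonal (fun i => ((s i : ℝ) : ℂ))) :
    ∀ i j, i ≠ j →
      (((s j ^ 2 - s i ^ 2 : ℝ) : ℂ) * (((U t₀)ᴴ * U') i j) = (Atil * S₀ + S₀ * Atilᴴ) i j ∧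
        (Atil * S₀ + S₀ * Atilᴴ) i j
          = ((s j : ℝ) : ℂ) * Atil i j + ((s i : ℝ) : ℂ) * starRingEnd ℂ (Atil j i)) :=
  offdiag_deriv_left_singular_vectors_general n A U V s sf t₀ A' U' V' s' Atil S₀ hA' hU' hV' hs' hs
    hU hV hSVD hAtil hS₀
end

section
/- (Off-diagonal derivative of the right singular vectors.) Let n ≥ 1 and let A, U, S, V : ℝ → M_n(ℂ) be differentiable at t₀ ∈ ℝ with A(t) = U(t) S(t) V(t)* for all t in a neighborhood of t₀, where U(t) and V(t) are unitary and S(t) is diagonal with real entries s_1(t), …, s_n(t). Set Ã = U(t₀)* A'(t₀) V(t₀), where ' denotes the derivative at t₀ and * the conjugate transpose, and write s_i = s_i(t₀). Then for all i ≠ j: (s_j² − s_i²) · (V(t₀)* V'(t₀))_{ij} = (S(t₀) Ã + Ã* S(t₀))_{ij} = s_i·Ã_{ij} + s_j·conj(Ã_{ji}). -/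
/-! Differentiating `A = U S Vᴴ` and conjugating by the unitaries gives `Ã = X S + S' - S Y`
with `X = Uᴴ U'` and `Y = Vᴴ V'`, both skew-Hermitian because `Uᴴ U = Vᴴ V = 1`. In `S Ã + Ãᴴ S`
the `X`-terms cancel, leaving `S S' + S' S + (Y S² - S² Y)`, whose `(i, j)` entry for `i ≠ j` is
`(sⱼ² - sᵢ²) Yᵢⱼ`. -/

open Matrix

variable {𝕜 E 𝔸 : Type*} {l m n : Type*}

section Entrywise

variable [NontriviallyNormedField 𝕜] [NormedAddCommGroup E] [NormedSpace 𝕜 E]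

-- Matrices carry no canonical norm, so derivatives of matrix paths are taken entrywise.
def HasDerivAtEntrywise (M : 𝕜 → Matrix m n E) (M' : Matrix m n E) (x : 𝕜) : Prop :=
  ∀ i j, HasDerivAt (fun t => M t i j) (M' i j) x

variable {M N : 𝕜 → Matrix m n E} {M' N' : Matrix m n E} {x : 𝕜}

theorem HasDerivAtEntrywise.unique (hM : HasDerivAtEntrywise M M' x)
    (hM₁ : HasDerivAtEntrywise M N' x) : M' = N' :=
  ext fun i j => (hM i j).unique (hM₁ i j)

theorem HasDerivAtEntrywise.congr_of_eventuallyEq (hM : HasDerivAtEntrywise M M' x)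
    (h : N =ᶠ[nhds x] M) : HasDerivAtEntrywise N M' x := fun i j =>
  (hM i j).congr_of_eventuallyEq (h.mono fun _ ht => congr_fun₂ ht i j)

theorem hasDerivAtEntrywise_const (C : Matrix m n E) :
    HasDerivAtEntrywise (fun _ => C) 0 x := fun _ _ => hasDerivAt_const x _

theorem hasDerivAtEntrywise_diagonal [DecidableEq n] {d : n → 𝕜 → E} {d' : n → E}
    (hd : ∀ i, HasDerivAt (d i) (d' i) x) :
    HasDerivAtEntrywise (fun t => diagonal fun i => d i t) (diagonal d') x := by
  intro i j
  rcases eq_or_ne i j with rfl | hij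
  · simpa using hd i
  · simpa [diagonal_apply_ne _ hij] using hasDerivAt_const x (0 : E)

theorem HasDerivAtEntrywise.mul [NormedRing 𝔸] [NormedAlgebra 𝕜 𝔸] [Fintype m]
    {M : 𝕜 → Matrix l m 𝔸} {N : 𝕜 → Matrix m n 𝔸} {M' : Matrix l m 𝔸} {N' : Matrix m n 𝔸}
    (hM : HasDerivAtEntrywise M M' x) (hN : HasDerivAtEntrywise N N' x) :
    HasDerivAtEntrywise (fun t => M t * N t) (M' * N x + M x * N') x := by
  intro i j
  simp only [mul_apply, Matrix.add_apply, ← Finset.sum_add_distrib]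
  exact HasDerivAt.fun_sum fun k _ => (hM i k).fun_mul (hN k j)

theorem HasDerivAtEntrywise.conjTranspose [StarRing 𝕜] [TrivialStar 𝕜] [StarAddMonoid E]
    [StarModule 𝕜 E] [ContinuousStar E] (hM : HasDerivAtEntrywise M M' x) :
    HasDerivAtEntrywise (fun t => (M t)ᴴ) M'ᴴ x := fun i j =>
  (hM j i).star

end Entrywise

theorem conjTranspose_mul_deriv_eq_neg_of_unitary [RCLike 𝕜] [Fintype n] [DecidableEq n]
    {W : ℝ → Matrix n n 𝕜} {W' : Matrix n n 𝕜} {x : ℝ} (hW' : HasDerivAtEntrywise W W' x)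
    (hW : ∀ᶠ t in nhds x, W t ∈ unitaryGroup n 𝕜) :
    ((W x)ᴴ * W')ᴴ = -((W x)ᴴ * W') := by
  have hconst : HasDerivAtEntrywise (fun t => (W t)ᴴ * W t) 0 x :=
    (hasDerivAtEntrywise_const 1).congr_of_eventuallyEq <|
      hW.mono fun _ ht => mem_unitaryGroup_iff'.mp ht
  have h := (hW'.conjTranspose.mul hW').unique hconst
  rw [conjTranspose_mul, conjTranspose_conjTranspose]
  exact eq_neg_of_add_eq_zero_left h

section Algebra

theorem conjTranspose_diagonal_ofReal [RCLike 𝕜] [DecidableEq n] (r : n → ℝ) :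
    (diagonal fun i => (r i : 𝕜))ᴴ = diagonal fun i => (r i : 𝕜) := by
  simp [diagonal_conjTranspose]

variable {R : Type*} [CommRing R] [Fintype n]

theorem mul_add_conjTranspose_mul_of_skew [StarRing R] {S D X Y : Matrix n n R} (hS : Sᴴ = S)
    (hD : Dᴴ = D) (hX : Xᴴ = -X) (hY : Yᴴ = -Y) :
    S * (X * S + D + S * Yᴴ) + (X * S + D + S * Yᴴ)ᴴ * S
      = S * D + D * S + (Y * (S * S) - S * S * Y) := by
  simp only [conjTranspose_add, conjTranspose_mul, conjTranspose_neg, hS, hD, hX, hY]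
  noncomm_ring

variable [DecidableEq n]

theorem conjTranspose_mul_svd_deriv_mul [StarRing R] {U V S D U' V' : Matrix n n R}
    (hU : Uᴴ * U = 1) (hV : Vᴴ * V = 1) :
    Uᴴ * ((U' * S + U * D) * Vᴴ + U * S * V'ᴴ) * V = Uᴴ * U' * S + D + S * (Vᴴ * V')ᴴ := by
  rw [conjTranspose_mul, conjTranspose_conjTranspose]
  calc Uᴴ * ((U' * S + U * D) * Vᴴ + U * S * V'ᴴ) * V
      = Uᴴ * U' * S * (Vᴴ * V) + (Uᴴ * U) * D * (Vᴴ * V) + (Uᴴ * U) * S * (V'ᴴ * V) := by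
        simp only [Matrix.mul_add, Matrix.add_mul, Matrix.mul_assoc]
    _ = Uᴴ * U' * S + D + S * (V'ᴴ * V) := by
        rw [hU, hV, Matrix.mul_one, Matrix.mul_one, Matrix.one_mul, Matrix.one_mul]

theorem diagonal_mul_add_mul_diagonal_apply_of_ne (d e : n → R) {i j : n} (hij : i ≠ j) :
    (diagonal d * diagonal e + diagonal e * diagonal d) i j = 0 := by
  simp [diagonal_mul_diagonal, diagonal_apply_ne _ hij]

theorem mul_diagonal_sub_diagonal_mul_apply (Y : Matrix n n R) (d : n → R) (i j : n) :
    (Y * diagonal d - diagonal d * Y) i j = (d j - d i) * Y i j := by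
  simp only [Matrix.sub_apply, mul_diagonal, diagonal_mul]
  ring

theorem diagonal_mul_add_conjTranspose_mul_diagonal_apply [StarRing R] (d : n → R)
    (B : Matrix n n R) (i j : n) :
    (diagonal d * B + Bᴴ * diagonal d) i j = d i * B i j + star (B j i) * d j := by
  simp [diagonal_mul, mul_diagonal, conjTranspose_apply]

end Algebra

theorem offdiag_deriv_right_singular_vectors_general (n : ℕ)
    (A U V : ℝ → Matrix (Fin n) (Fin n) ℂ) (s : Fin n → ℝ) (sf : Fin n → ℝ → ℝ) (t₀ : ℝ)
    (A' U' V' : Matrix (Fin n) (Fin n) ℂ) (s' : Fin n → ℝ)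
    (Atil S₀ : Matrix (Fin n) (Fin n) ℂ)
    (hA' : ∀ i j, HasDerivAt (fun t => A t i j) (A' i j) t₀)
    (hU' : ∀ i j, HasDerivAt (fun t => U t i j) (U' i j) t₀)
    (hV' : ∀ i j, HasDerivAt (fun t => V t i j) (V' i j) t₀)
    (hs' : ∀ i, HasDerivAt (sf i) (s' i) t₀)
    (hs : ∀ i, sf i t₀ = s i)
    (hU : ∀ᶠ t in nhds t₀, U t ∈ Matrix.unitaryGroup (Fin n) ℂ)
    (hV : ∀ᶠ t in nhds t₀, V t ∈ Matrix.unitaryGroup (Fin n) ℂ)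
    (hSVD : ∀ᶠ t in nhds t₀,
      A t = U t * Matrix.diagonal (fun i => ((sf i t : ℝ) : ℂ)) * (V t)ᴴ)
    (hAtil : Atil = (U t₀)ᴴ * A' * V t₀)
    (hS₀ : S₀ = Matrix.diagonal (fun i => ((s i : ℝ) : ℂ))) :
    ∀ i j, i ≠ j →
      (((s j ^ 2 - s i ^ 2 : ℝ) : ℂ) * (((V t₀)ᴴ * V') i j) = (S₀ * Atil + Atilᴴ * S₀) i j ∧
        (S₀ * Atil + Atilᴴ * S₀) i j
          = ((s i : ℝ) : ℂ) * Atil i j + ((s j : ℝ) : ℂ) * starRingEnd ℂ (Atil j i)) := by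
  set D : Matrix (Fin n) (Fin n) ℂ := diagonal fun i => ((s' i : ℝ) : ℂ)
  have hS : HasDerivAtEntrywise (fun t => diagonal fun i => ((sf i t : ℝ) : ℂ)) D t₀ :=
    hasDerivAtEntrywise_diagonal fun i => (hs' i).ofReal_comp
  have hS_t₀ : (diagonal fun i => ((sf i t₀ : ℝ) : ℂ)) = S₀ := by simp [hS₀, hs]
  have hA'_eq : A' = (U' * S₀ + U t₀ * D) * (V t₀)ᴴ + U t₀ * S₀ * V'ᴴ := by
    have hSVD' := ((HasDerivAtEntrywise.mul hU' hS).mul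
      (HasDerivAtEntrywise.conjTranspose hV')).congr_of_eventuallyEq hSVD
    rw [hS_t₀] at hSVD'
    exact HasDerivAtEntrywise.unique hA' hSVD'
  have hAtil_eq : Atil = (U t₀)ᴴ * U' * S₀ + D + S₀ * ((V t₀)ᴴ * V')ᴴ := by
    rw [hAtil, hA'_eq, conjTranspose_mul_svd_deriv_mul (mem_unitaryGroup_iff'.mp hU.self_of_nhds)
      (mem_unitaryGroup_iff'.mp hV.self_of_nhds)]
  have hsum := mul_add_conjTranspose_mul_of_skew (D := D) (hS₀ ▸ conjTranspose_diagonal_ofReal s)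
    (conjTranspose_diagonal_ofReal s') (conjTranspose_mul_deriv_eq_neg_of_unitary hU' hU)
    (conjTranspose_mul_deriv_eq_neg_of_unitary hV' hV)
  intro i j hij
  constructor
  · rw [hAtil_eq, hsum, Matrix.add_apply, hS₀, diagonal_mul_add_mul_diagonal_apply_of_ne _ _ hij,
      diagonal_mul_diagonal, mul_diagonal_sub_diagonal_mul_apply]
    push_cast
    ring
  · rw [hS₀, diagonal_mul_add_conjTranspose_mul_diagonal_apply]
    simp only [Complex.star_def]
    ring

/-- **Off-diagonal derivative of the right singular vectors.** Along a differentiable SVD path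
`A(t) = U(t) S(t) V(t)ᴴ` with `U, V` unitary and `S = diagonal (s₁,…,sₙ)` real, for `i ≠ j`:
`(sⱼ² − sᵢ²) (U(t₀)ᴴ U'(t₀))ᵢⱼ = (Atil S(t₀) + S(t₀) Atilᴴ)ᵢⱼ = sⱼ Atilᵢⱼ + sᵢ conj Atilⱼᵢ`,
where `Atil = U(t₀)ᴴ A'(t₀) V(t₀)`. -/
theorem offdiag_deriv_right_singular_vectors (n : ℕ) (hn : 1 ≤ n)
    (A U V : ℝ → Matrix (Fin n) (Fin n) ℂ) (s : Fin n → ℝ) (sf : Fin n → ℝ → ℝ) (t₀ : ℝ)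
    (A' U' V' : Matrix (Fin n) (Fin n) ℂ) (s' : Fin n → ℝ)
    (Atil S₀ : Matrix (Fin n) (Fin n) ℂ)
    (hA' : ∀ i j, HasDerivAt (fun t => A t i j) (A' i j) t₀)
    (hU' : ∀ i j, HasDerivAt (fun t => U t i j) (U' i j) t₀)
    (hV' : ∀ i j, HasDerivAt (fun t => V t i j) (V' i j) t₀)
    (hs' : ∀ i, HasDerivAt (sf i) (s' i) t₀)
    (hs : ∀ i, sf i t₀ = s i)
    (hU : ∀ᶠ t in nhds t₀, U t ∈ Matrix.unitaryGroup (Fin n) ℂ)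
    (hV : ∀ᶠ t in nhds t₀, V t ∈ Matrix.unitaryGroup (Fin n) ℂ)
    (hSVD : ∀ᶠ t in nhds t₀,
      A t = U t * Matrix.diagonal (fun i => ((sf i t : ℝ) : ℂ)) * (V t)ᴴ)
    (hAtil : Atil = (U t₀)ᴴ * A' * V t₀)
    (hS₀ : S₀ = Matrix.diagonal (fun i => ((s i : ℝ) : ℂ))) :
    ∀ i j, i ≠ j →
      (((s j ^ 2 - s i ^ 2 : ℝ) : ℂ) * (((V t₀)ᴴ * V') i j) = (S₀ * Atil + Atilᴴ * S₀) i j ∧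
        (S₀ * Atil + Atilᴴ * S₀) i j
          = ((s i : ℝ) : ℂ) * Atil i j + ((s j : ℝ) : ℂ) * starRingEnd ℂ (Atil j i)) :=
  offdiag_deriv_right_singular_vectors_general n A U V s sf t₀ A' U' V' s' Atil S₀ hA' hU' hV' hs'
    hs hU hV hSVD hAtil hS₀
end

section
/- (Validity of the SVD Jacobian-vector product rule.) Let n ≥ 1 and let A, U, S, V : ℝ → M_n(ℂ) be differentiable at t₀ ∈ ℝ with A(t) = U(t) S(t) V(t)* for all t in a neighborhood of t₀, where U(t) and V(t) are unitary and S(t) is diagonal with real entries s_1(t), …, s_n(t). Set Ã = U(t₀)* A'(t₀) V(t₀), write s_i = s_i(t₀), and assume the s_i are nonzero with s_i² ≠ s_j² for i ≠ j. Define matrices dŨ, dṼ, dS ∈ M_n(ℂ) by: dŨ_{ij} = (s_j·Ã_{ij} + s_i·conj(Ã_{ji}))/(s_j² − s_i²) for i ≠ j, dŨ_{ii} = (Ã_{ii} − conj(Ã_{ii}))/(2·s_i); dṼ_{ij} = (s_i·Ã_{ij} + s_j·conj(Ã_{ji}))/(s_j² − s_i²) for i ≠ j, dṼ_{ii} = 0;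 and dS diagonal with dS_{ii} = Re(Ã_{ii}). Then U(t₀)·(dŨ·S(t₀) + dS + S(t₀)·dṼ*)·V(t₀)* = A'(t₀). In particular, the derivative A'(t₀) is recovered regardless of how the diagonal sum is split between dŨ and dṼ*. -/
open Matrix ComplexConjugate

/-! The identity is purely algebraic: by unitarity `A'(t₀) = U(t₀) Ã V(t₀)ᴴ`, so it suffices that
`dŨ S + dS + S dṼᴴ = Ã`. Off the diagonal the `(i, j)` entry is
`(s_j² Ã_{ij} − s_i² Ã_{ij}) / (s_j² − s_i²)`, the cross terms in `conj Ã_{ji}` cancelling;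
on the diagonal it is `i Im Ã_{ii} + Re Ã_{ii}`. -/

theorem Unitary.mul_star_mul_mul_mul_star {R : Type*} [Monoid R] [StarMul R] {U V : R}
    (hU : U ∈ unitary R) (hV : V ∈ unitary R) (M : R) : U * (star U * M * V) * star V = M := by
  simp only [← mul_assoc, Unitary.mul_star_self_of_mem hU, one_mul]
  simp only [mul_assoc, Unitary.mul_star_self_of_mem hV, mul_one]

section SvdJvp

variable {ι : Type*} [DecidableEq ι]

/-- The paper's `dŨ`, for singular values `s` and `Ã = X`. -/
noncomputable def svdJvpU (s : ι → ℝ) (X : Matrix ι ι ℂ) : Matrix ι ι ℂ :=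
  Matrix.of fun i j =>
    if i = j then (X i i - conj (X i i)) / (2 * (s i : ℂ))
    else ((s j : ℂ) * X i j + (s i : ℂ) * conj (X j i))
      / (((s j ^ 2 - s i ^ 2 : ℝ) : ℂ))

/-- The paper's `dṼ`, for singular values `s` and `Ã = X`. -/
noncomputable def svdJvpV (s : ι → ℝ) (X : Matrix ι ι ℂ) : Matrix ι ι ℂ :=
  Matrix.of fun i j =>
    if i = j then 0
    else ((s i : ℂ) * X i j + (s j : ℂ) * conj (X j i))
      / (((s j ^ 2 - s i ^ 2 : ℝ) : ℂ))

variable (s : ι → ℝ) (X : Matrix ι ι ℂ)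

theorem svdJvpU_apply_self_mul_add_re {i : ι} (hs : s i ≠ 0) :
    svdJvpU s X i i * (s i : ℂ) + ((X i i).re : ℂ) = X i i := by
  have hs' : (s i : ℂ) ≠ 0 := Complex.ofReal_ne_zero.mpr hs
  simp only [svdJvpU, of_apply, if_true, Complex.sub_conj]
  field_simp
  push_cast
  linear_combination 2 * Complex.re_add_im (X i i)

theorem svdJvpU_mul_add_mul_conj_svdJvpV {i j : ι} (hij : i ≠ j)
    (hgap : s i ^ 2 ≠ s j ^ 2) :
    svdJvpU s X i j * (s j : ℂ) + (s i : ℂ) * conj (svdJvpV s X j i) = X i j := by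
  have hden_ji : (s j : ℂ) ^ 2 - (s i : ℂ) ^ 2 ≠ 0 := by exact_mod_cast sub_ne_zero.mpr hgap.symm
  have hden_ij : (s i : ℂ) ^ 2 - (s j : ℂ) ^ 2 ≠ 0 := by exact_mod_cast sub_ne_zero.mpr hgap
  simp only [svdJvpU, svdJvpV, of_apply, if_neg hij, if_neg (Ne.symm hij), map_div₀, map_add,
    map_mul, Complex.conj_conj, Complex.conj_ofReal]
  push_cast
  field_simp
  ring

variable [Fintype ι]

theorem svdJvpU_mul_add_diagonal_re_add_mul_svdJvpV_conjTranspose (hs : ∀ i, s i ≠ 0)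
    (hgap : ∀ i j, i ≠ j → s i ^ 2 ≠ s j ^ 2) :
    svdJvpU s X * diagonal (fun i => (s i : ℂ)) + diagonal (fun i => ((X i i).re : ℂ))
      + diagonal (fun i => (s i : ℂ)) * (svdJvpV s X)ᴴ = X := by
  ext i j
  simp only [Matrix.add_apply, mul_diagonal, diagonal_mul, diagonal_apply, conjTranspose_apply]
  rcases eq_or_ne i j with rfl | hij
  · simp only [if_true, svdJvpV, of_apply, star_zero, mul_zero, add_zero]
    exact svdJvpU_apply_self_mul_add_re s X (hs i)
  · simp only [if_neg hij, add_zero]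
    exact svdJvpU_mul_add_mul_conj_svdJvpV s X hij (hgap i j hij)

end SvdJvp

theorem svd_jvp_rule_valid_general (n : ℕ)
    (U V : ℝ → Matrix (Fin n) (Fin n) ℂ) (s : Fin n → ℝ) (t₀ : ℝ)
    (A' : Matrix (Fin n) (Fin n) ℂ)
    (Atil S₀ dU dV dS : Matrix (Fin n) (Fin n) ℂ)
    (hU : ∀ᶠ t in nhds t₀, U t ∈ Matrix.unitaryGroup (Fin n) ℂ)
    (hV : ∀ᶠ t in nhds t₀, V t ∈ Matrix.unitaryGroup (Fin n) ℂ)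
    (hAtil : Atil = (U t₀)ᴴ * A' * V t₀)
    (hS₀ : S₀ = Matrix.diagonal (fun i => ((s i : ℝ) : ℂ)))
    (hsne : ∀ i, s i ≠ 0)
    (hgap : ∀ i j, i ≠ j → s i ^ 2 ≠ s j ^ 2)
    (hdU : ∀ i j, dU i j =
      if i = j then (Atil i i - starRingEnd ℂ (Atil i i)) / (2 * ((s i : ℝ) : ℂ))
      else (((s j : ℝ) : ℂ) * Atil i j + ((s i : ℝ) : ℂ) * starRingEnd ℂ (Atil j i))
        / (((s j ^ 2 - s i ^ 2 : ℝ) : ℂ)))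
    (hdV : ∀ i j, dV i j =
      if i = j then 0
      else (((s i : ℝ) : ℂ) * Atil i j + ((s j : ℝ) : ℂ) * starRingEnd ℂ (Atil j i))
        / (((s j ^ 2 - s i ^ 2 : ℝ) : ℂ)))
    (hdS : dS = Matrix.diagonal (fun i => (((Atil i i).re : ℝ) : ℂ))) :
    U t₀ * (dU * S₀ + dS + S₀ * dVᴴ) * (V t₀)ᴴ = A' := by
  obtain rfl : dU = svdJvpU s Atil := Matrix.ext hdU
  obtain rfl : dV = svdJvpV s Atil := Matrix.ext hdV
  subst hS₀ hdS
  rw [svdJvpU_mul_add_diagonal_re_add_mul_svdJvpV_conjTranspose s Atil hsne hgap, hAtil]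
  exact Unitary.mul_star_mul_mul_mul_star hU.self_of_nhds hV.self_of_nhds A'

/-- **Validity of the SVD Jacobian-vector product rule.** Along a differentiable SVD path
`A(t) = U(t) S(t) V(t)ᴴ` with `U, V` unitary and `S = diagonal (s₁,…,sₙ)` real, with all
`sᵢ ≠ 0` and `sᵢ² ≠ sⱼ²` for `i ≠ j`, the matrices `dŨ`, `dṼ`, `dS` built from
`Ã = U(t₀)ᴴ A'(t₀) V(t₀)` by the JVP rule satisfy
`U(t₀) (dŨ S(t₀) + dS + S(t₀) dṼᴴ) V(t₀)ᴴ = A'(t₀)`. -/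
theorem svd_jvp_rule_valid (n : ℕ) (hn : 1 ≤ n)
    (A U V : ℝ → Matrix (Fin n) (Fin n) ℂ) (s : Fin n → ℝ) (sf : Fin n → ℝ → ℝ) (t₀ : ℝ)
    (A' U' V' : Matrix (Fin n) (Fin n) ℂ) (s' : Fin n → ℝ)
    (Atil S₀ dU dV dS : Matrix (Fin n) (Fin n) ℂ)
    (hA' : ∀ i j, HasDerivAt (fun t => A t i j) (A' i j) t₀)
    (hU' : ∀ i j, HasDerivAt (fun t => U t i j) (U' i j) t₀)
    (hV' : ∀ i j, HasDerivAt (fun t => V t i j) (V' i j) t₀)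
    (hs' : ∀ i, HasDerivAt (sf i) (s' i) t₀)
    (hs : ∀ i, sf i t₀ = s i)
    (hU : ∀ᶠ t in nhds t₀, U t ∈ Matrix.unitaryGroup (Fin n) ℂ)
    (hV : ∀ᶠ t in nhds t₀, V t ∈ Matrix.unitaryGroup (Fin n) ℂ)
    (hSVD : ∀ᶠ t in nhds t₀,
      A t = U t * Matrix.diagonal (fun i => ((sf i t : ℝ) : ℂ)) * (V t)ᴴ)
    (hAtil : Atil = (U t₀)ᴴ * A' * V t₀)
    (hS₀ : S₀ = Matrix.diagonal (fun i => ((s i : ℝ) : ℂ)))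
    (hsne : ∀ i, s i ≠ 0)
    (hgap : ∀ i j, i ≠ j → s i ^ 2 ≠ s j ^ 2)
    (hdU : ∀ i j, dU i j =
      if i = j then (Atil i i - starRingEnd ℂ (Atil i i)) / (2 * ((s i : ℝ) : ℂ))
      else (((s j : ℝ) : ℂ) * Atil i j + ((s i : ℝ) : ℂ) * starRingEnd ℂ (Atil j i))
        / (((s j ^ 2 - s i ^ 2 : ℝ) : ℂ)))
    (hdV : ∀ i j, dV i j =
      if i = j then 0
      else (((s i : ℝ) : ℂ) * Atil i j + ((s j : ℝ) : ℂ) * starRingEnd ℂ (Atil j i))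
        / (((s j ^ 2 - s i ^ 2 : ℝ) : ℂ)))
    (hdS : dS = Matrix.diagonal (fun i => (((Atil i i).re : ℝ) : ℂ))) :
    U t₀ * (dU * S₀ + dS + S₀ * dVᴴ) * (V t₀)ᴴ = A' :=
  svd_jvp_rule_valid_general n U V s t₀ A' Atil S₀ dU dV dS hU hV hAtil hS₀ hsne hgap hdU hdV hdS
end
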